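/- Let (a₁,…,a_{2k+1}) be a list of complex numbers with a_{2i−1} + a_{2i} ∈ ℤ_{≥0} for i = 1,…,k, and suppose a_{2k+1} is the ♯′-special element of (a₁,…,a_{2k+1}). Then −1−a_{2k+1} is the ♯′-special element of the list (a₁,…,a_{2k}, −1−a_{2k+1}). -/

import Mathlib

open PowerSeries Polynomial

noncomputable section

abbrev PS := PowerSeries ℂ

/-- `f ∈ 1 + u⁻¹ℂ[[u⁻¹]]`, with `X` playing the role of `u⁻¹`. -/
def One1 (f : PS) : Prop := PowerSeries.constantCoeff f = 1

/-- `f ∈ 1 + u⁻²ℂ[[u⁻²]]`: an even power series with constant term 1. -/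
def EvenOne (f : PS) : Prop := One1 f ∧ ∀ n, Odd n → PowerSeries.coeff n f = 0

/-- `u^{-deg P}·P(u)` viewed as a power series in `X = u⁻¹`. -/
def lowerP (P : Polynomial ℂ) : PS := (P.reverse : PowerSeries ℂ)

/-- `f → g`: there is a monic `P` with `f/g = P(u+1)/P(u)`. -/
def Arrow (f g : PS) : Prop :=
  ∃ P : Polynomial ℂ, P.Monic ∧ f * lowerP P = g * lowerP (P.comp (Polynomial.X + 1))

/-- `f ⇒ g`: there is a monic `P` of even degree with `P(u) = P(1−u)` and
`f/g = P(u+1)/P(u)`. -/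
def DArrow (f g : PS) : Prop :=
  ∃ P : Polynomial ℂ, P.Monic ∧ Even P.natDegree ∧ P.comp (1 - Polynomial.X) = P ∧
    f * lowerP P = g * lowerP (P.comp (Polynomial.X + 1))

/-- `f(−u)`, i.e. `u⁻¹ ↦ −u⁻¹`. -/
def negU (f : PS) : PS := PowerSeries.rescale (-1) f

/-- the factor `1 + a·u⁻¹`. -/
def linF (a : ℂ) : PS := 1 + PowerSeries.C a * PowerSeries.X

/-- `f` is a polynomial in `u⁻¹`. -/
def IsPolyPS (f : PS) : Prop := ∃ Q : Polynomial ℂ, (Q : PS) = f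

/-- `z ∈ ℤ_{≥0}` (so `a ≥ b` iff `IsNonnegInt (a - b)`). -/
def IsNonnegInt (z : ℂ) : Prop := ∃ n : ℕ, z = n
/-- The ♯′-condition on the list `a 0, …, a (2k)` (0-indexed): for each `i < k`,
whenever `{a p + a q : 2i ≤ p < q ≤ 2k} ∩ ℤ_{≥0}` is non-empty, `a (2i) + a (2i+1)`
is its minimal element for the order `x ≥ y ↔ x - y ∈ ℤ_{≥0}`. -/
def SharpCond (k : ℕ) (a : ℕ → ℂ) : Prop :=
  ∀ i < k,
    (∃ p q, 2*i ≤ p ∧ p < q ∧ q ≤ 2*k ∧ IsNonnegInt (a p + a q)) →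
      IsNonnegInt (a (2*i) + a (2*i+1)) ∧
      ∀ p q, 2*i ≤ p → p < q → q ≤ 2*k → IsNonnegInt (a p + a q) →
        IsNonnegInt (a p + a q - (a (2*i) + a (2*i+1)))

/-- `b` is a re-indexing (permutation) of the first `m` entries of `a`. -/
def PermOf (m : ℕ) (b a : ℕ → ℂ) : Prop :=
  ∃ σ : Equiv.Perm (Fin m), ∀ i : Fin m, b i = a (σ i)

/-- `x` is a ♯′-special element of the list `a 0, …, a (2k)`. -/
def IsSharpSpecial' (k : ℕ) (a : ℕ → ℂ) (x : ℂ) : Prop :=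
  ∃ b : ℕ → ℂ, PermOf (2*k+1) b a ∧ SharpCond k b ∧ b (2*k) = x

/-!
Transport the pairing `a (2i) + a (2i+1) ∈ ℤ≥0` along the re-indexing to a fixed-point-free
involution `π` of the first `2k` positions of the ♯′-ordered list `b`, with every
`b x + b (π x) ∈ ℤ≥0`. Then for every `i < k` some two entries at positions `≥ 2i` have sum in
`ℤ≥0`: at the first `i` where this fails, walk from `2i` alternately along `π` and along the
block pairing. The ♯′-minimality of the earlier blocks keeps `b x ≤ b (2i)` along the walk, so
when `π` first leaves the earlier blocks it lands on a partner of `2i` with sum in `ℤ≥0`; it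
cannot land on `2i` itself, as the reflections of the dihedral group generated by the two
involutions have no fixed points. Hence every block sum is the minimal `ℤ≥0` sum of its range,
and replacing the last entry `c` by `-1 - c` keeps the ♯′-condition: a new sum
`b p - 1 - c ∈ ℤ≥0` dominates the block sum of `p`, since otherwise the partner `w` of `p` would
make `b w + c` a smaller `ℤ≥0` sum in that block's range.
-/

open Equiv Function

theorem IsNonnegInt.add {x y : ℂ} (hx : IsNonnegInt x) (hy : IsNonnegInt y) :
    IsNonnegInt (x + y) := by
  obtain ⟨m, rfl⟩ := hx
  obtain ⟨n, rfl⟩ := hy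
  exact ⟨m + n, by push_cast; ring⟩

theorem IsNonnegInt.not_neg_sub_one {x : ℂ} (hx : IsNonnegInt x) : ¬ IsNonnegInt (-x - 1) := by
  rintro ⟨n, hn⟩
  obtain ⟨m, rfl⟩ := hx
  have : ((n + m + 1 : ℕ) : ℂ) = 0 := by push_cast; linear_combination -hn
  exact Nat.succ_ne_zero _ (Nat.cast_eq_zero.mp this)

theorem IsNonnegInt.sub_sub_one_or_sub {x y : ℂ} (hx : IsNonnegInt x) (hy : IsNonnegInt y) :
    IsNonnegInt (x - y - 1) ∨ IsNonnegInt (y - x) := by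
  obtain ⟨m, rfl⟩ := hx
  obtain ⟨n, rfl⟩ := hy
  rcases lt_or_ge n m with h | h
  · exact .inl ⟨m - n - 1, by rw [Nat.sub_sub, Nat.cast_sub h]; push_cast; ring⟩
  · exact .inr ⟨n - m, by rw [Nat.cast_sub h]⟩

namespace Equiv.Perm

variable {α : Type*} {s t : Perm α}

theorem apply_mul_pow_apply_ne (hs : Involutive s) (ht : Involutive t)
    (hs₀ : ∀ x, s x ≠ x) (ht₀ : ∀ x, t x ≠ x) (m : ℕ) (x : α) :
    s (((t * s) ^ m) x) ≠ x := by
  induction m using Nat.twoStepInduction generalizing x with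
  | zero => exact hs₀ x
  | one =>
    intro h
    exact ht₀ (s x) (by simpa [hs (t (s x))] using congrArg s h)
  | more m ih _ =>
    -- `s (t s)^(m+2)` is the conjugate of `s (t s)^m` by `s t`
    intro h
    apply ih (t (s x))
    rw [pow_succ, pow_succ'] at h
    simp only [Perm.mul_apply] at h
    calc s (((t * s) ^ m) (t (s x)))
        = t (s (s (t (s (((t * s) ^ m) (t (s x))))))) := by rw [hs, ht]
      _ = t (s x) := by rw [h]

theorem exists_alternating_walk_exit [Finite α] (hs : Involutive s) (ht : Involutive t)
    (hs₀ : ∀ x, s x ≠ x) (ht₀ : ∀ x, t x ≠ x) {L : Set α} (hL : ∀ x ∈ L, t x ∈ L)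
    {p : α} (hp : p ∉ L) {P : α → Prop} (h₀ : P p)
    (hstep : ∀ x, P x → s x ∈ L → P (t (s x))) :
    ∃ x, P x ∧ s x ∉ L ∧ s x ≠ p := by
  by_contra! hexit
  have hP (m : ℕ) : P (((t * s) ^ m) p) := by
    induction m with
    | zero => exact h₀
    | succ m ih =>
      rw [pow_succ', Perm.mul_apply, Perm.mul_apply]
      refine hstep _ ih (not_not.mp fun hL' => ?_)
      exact apply_mul_pow_apply_ne hs ht hs₀ ht₀ m p (hexit _ ih hL')
  -- the walk returns to `p`; the step before, `s` sends it to `t p ∉ L`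
  obtain ⟨m, hm⟩ : ∃ m, (t * s) ^ m = (t * s)⁻¹ :=
    mem_powers_iff_mem_zpowers.mpr (inv_mem (Subgroup.mem_zpowers _))
  have hlast : s (((t * s) ^ m) p) = t p := by
    rw [hm, mul_inv_rev, Perm.mul_apply, Perm.coe_inv, Perm.coe_inv, apply_symm_apply,
      symm_apply_eq, ht]
  have htp : t p ∉ L := fun h => hp (ht p ▸ hL _ h)
  exact ht₀ p (hlast ▸ hexit _ (hP m) (hlast ▸ htp))

end Equiv.Perm

def pairPartner (n : ℕ) : ℕ := if n % 2 = 0 then n + 1 else n - 1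

theorem pairPartner_pairPartner (n : ℕ) : pairPartner (pairPartner n) = n := by
  unfold pairPartner; split_ifs <;> omega

theorem pairPartner_ne (n : ℕ) : pairPartner n ≠ n := by
  unfold pairPartner; split_ifs <;> omega

theorem pairPartner_div_two (n : ℕ) : pairPartner n / 2 = n / 2 := by
  unfold pairPartner; split_ifs <;> omega

theorem add_apply_pairPartner {M : Type*} [AddCommMagma M] (f : ℕ → M) (n : ℕ) :
    f n + f (pairPartner n) = f (2 * (n / 2)) + f (2 * (n / 2) + 1) := by
  unfold pairPartner
  split_ifs
  · rw [show 2 * (n / 2) = n by omega]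
  · rw [add_comm, show 2 * (n / 2) = n - 1 by omega, show n - 1 + 1 = n by omega]

def pairSwap (k : ℕ) : Perm (Fin (2 * k)) :=
  Involutive.toPerm (fun x => ⟨pairPartner x, by have := pairPartner_div_two x; omega⟩)
    fun x => Fin.ext (pairPartner_pairPartner x)

@[simp]
theorem val_pairSwap {k : ℕ} (x : Fin (2 * k)) : (pairSwap k x : ℕ) = pairPartner x := rfl

theorem pairSwap_involutive (k : ℕ) : Involutive (pairSwap k) :=
  fun x => Fin.ext (pairPartner_pairPartner x)

theorem pairSwap_ne (k : ℕ) (x : Fin (2 * k)) : pairSwap k x ≠ x :=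
  fun h => pairPartner_ne x (congrArg Fin.val h)

def HasNonnegMatching (m : ℕ) (b : ℕ → ℂ) : Prop :=
  ∃ π : Perm (Fin m), Involutive π ∧ (∀ x, π x ≠ x) ∧ ∀ x : Fin m, IsNonnegInt (b x + b (π x))

theorem hasNonnegMatching_of_pairs {k : ℕ} {a : ℕ → ℂ}
    (h : ∀ i < k, IsNonnegInt (a (2 * i) + a (2 * i + 1))) : HasNonnegMatching (2 * k) a := by
  refine ⟨pairSwap k, pairSwap_involutive k, pairSwap_ne k, fun x => ?_⟩
  rw [val_pairSwap, add_apply_pairPartner]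
  exact h _ (by omega)

theorem HasNonnegMatching.of_perm {m : ℕ} {a b : ℕ → ℂ} (h : HasNonnegMatching m a)
    (τ : Perm (Fin m)) (hτ : ∀ x : Fin m, b x = a (τ x)) : HasNonnegMatching m b := by
  obtain ⟨π, hπ, hπ₀, hsum⟩ := h
  refine ⟨τ⁻¹ * π * τ, fun x => by simp [hπ (τ x)], fun x hx => hπ₀ (τ x) ?_, fun x => ?_⟩
  · simpa [symm_apply_eq] using hx
  · simpa [hτ] using hsum (τ x)

theorem PermOf.exists_perm_init {m : ℕ} {b a : ℕ → ℂ} (h : PermOf (m + 1) b a)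
    (hm : b m = a m) : ∃ τ : Perm (Fin m), ∀ x : Fin m, b x = a (τ x) := by
  obtain ⟨σ, hσ⟩ := h
  let e : Option (Fin m) ≃ Option (Fin m) :=
    (finSuccEquivLast.symm.trans σ).trans finSuccEquivLast
  refine ⟨removeNone e, fun x => ?_⟩
  have hx : b x = a (σ x.castSucc) := hσ x.castSucc
  cases hy : σ x.castSucc using Fin.lastCases with
  | last =>
    obtain ⟨y, hy'⟩ : ∃ y, Fin.castSucc y = σ (Fin.last m) :=
      Fin.exists_castSucc_eq.mpr fun h' =>
        Fin.castSucc_ne_last x (σ.injective (hy.trans h'.symm))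
    have h1 : removeNone e x = y := Option.some_injective _ <| by
      rw [removeNone_none e (by simp [e, finSuccEquivLast_symm_some, hy])]
      simp [e, ← hy', finSuccEquivLast_castSucc]
    have hlast := hσ (Fin.last m)
    rw [← hy', Fin.val_last, Fin.val_castSucc] at hlast
    rw [hx, hy, h1, Fin.val_last, ← hm, hlast]
  | cast y =>
    have h1 : removeNone e x = y := Option.some_injective _ <| by
      rw [removeNone_some e
        ⟨y, by simp [e, finSuccEquivLast_symm_some, hy, finSuccEquivLast_castSucc]⟩]
      simp [e, finSuccEquivLast_symm_some, hy, finSuccEquivLast_castSucc]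
    rw [hx, hy, h1, Fin.val_castSucc]

theorem permOf_ite_last {m : ℕ} {b a : ℕ → ℂ} (τ : Perm (Fin m))
    (hτ : ∀ x : Fin m, b x = a (τ x)) (z : ℂ) :
    PermOf (m + 1) (fun n => if n = m then z else b n) (fun n => if n = m then z else a n) := by
  refine ⟨(finSuccEquivLast.trans τ.optionCongr).trans finSuccEquivLast.symm, fun i => ?_⟩
  cases i using Fin.lastCases with
  | last => simp [finSuccEquivLast_last]
  | cast x => simp [finSuccEquivLast_castSucc, finSuccEquivLast_symm_some, hτ, (Fin.is_lt _).ne]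

def HasNonnegPairFrom (k : ℕ) (b : ℕ → ℂ) (m : ℕ) : Prop :=
  ∃ p q, m ≤ p ∧ p < q ∧ q ≤ 2 * k ∧ IsNonnegInt (b p + b q)

theorem SharpCond.hasNonnegPairFrom {k : ℕ} {b : ℕ → ℂ} (hb : SharpCond k b)
    (hmatch : HasNonnegMatching (2 * k) b) {i : ℕ} (hi : i < k) :
    HasNonnegPairFrom k b (2 * i) := by
  obtain ⟨π, hπ, hπ₀, hsum⟩ := hmatch
  induction i using Nat.strong_induction_on with
  | _ i ih =>
  by_contra hS
  let p : Fin (2 * k) := ⟨2 * i, by omega⟩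
  have hpair (x : Fin (2 * k)) (hx : IsNonnegInt (b p - b x)) : IsNonnegInt (b (π x) + b p) := by
    convert (hsum x).add hx using 1; ring
  have hstep (x : Fin (2 * k)) (hx : IsNonnegInt (b p - b x)) (hπx : (π x : ℕ) < 2 * i) :
      IsNonnegInt (b p - b (pairSwap k (π x))) := by
    have hj : (π x : ℕ) / 2 < i := by omega
    have hmin := (hb _ (hj.trans hi) (ih _ hj (hj.trans hi))).2 (π x) (2 * i) (by omega) hπx
      (by omega) (hpair x hx)
    rwa [← add_apply_pairPartner, add_sub_add_left_eq_sub] at hmin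
  obtain ⟨x, hx, hxL, hxp⟩ := Perm.exists_alternating_walk_exit hπ (pairSwap_involutive k)
    hπ₀ (pairSwap_ne k) (L := {y | (y : ℕ) < 2 * i})
    (fun y hy => by
      simp only [Set.mem_ofPred_eq, val_pairSwap] at hy ⊢
      have := pairPartner_div_two y
      omega)
    (p := p) (by simp [p]) (P := fun x => IsNonnegInt (b p - b x)) ⟨0, by simp⟩ hstep
  simp only [Set.mem_ofPred_eq, not_lt] at hxL
  have hxp' : (π x : ℕ) ≠ 2 * i := fun h => hxp (Fin.ext h)
  exact hS ⟨2 * i, π x, le_rfl, by omega, (π x).2.le, add_comm (b _) _ ▸ hpair x hx⟩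

theorem SharpCond.ite_last {k : ℕ} {b : ℕ → ℂ} (hb : SharpCond k b)
    (hpairs : ∀ i < k, HasNonnegPairFrom k b (2 * i)) :
    SharpCond k (fun n => if n = 2 * k then -1 - b (2 * k) else b n) := by
  intro i hi _
  obtain ⟨hblock, hmin⟩ := hb i hi (hpairs i hi)
  simp only [if_neg (show 2 * i ≠ 2 * k by omega), if_neg (show 2 * i + 1 ≠ 2 * k by omega)]
  refine ⟨hblock, fun p q hp hpq hq hD => ?_⟩
  rcases hq.lt_or_eq with hq | rfl
  · simp only [if_neg hq.ne, if_neg (show p ≠ 2 * k by omega)] at hD ⊢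
    exact hmin p q hp hpq hq.le hD
  simp only [↓reduceIte, if_neg hpq.ne] at hD ⊢
  have hp' := pairPartner_div_two p
  obtain ⟨hblock_p, hmin_p⟩ := hb (p / 2) (by omega) (hpairs _ (by omega))
  have hsum_p := add_apply_pairPartner b p
  rcases hblock_p.sub_sub_one_or_sub hD with h | h
  · have := hmin_p (pairPartner p) (2 * k) (by omega) (by omega) le_rfl
      (by convert h using 1; linear_combination hsum_p)
    exact (hD.not_neg_sub_one (by convert this using 1; linear_combination -hsum_p)).elim
  · have := hmin (2 * (p / 2)) (2 * (p / 2) + 1) (by omega) (by omega) (by omega) hblock_p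
    convert h.add this using 1; ring

/-- If a_{2k+1} is the ♯′-special element of (a₁,…,a_{2k+1}), then −1−a_{2k+1} is the
♯′-special element of (a₁,…,a_{2k},−1−a_{2k+1}). -/
theorem sharp_special_flip (k : ℕ) (a : ℕ → ℂ)
    (hpa : ∀ i < k, IsNonnegInt (a (2*i) + a (2*i+1)))
    (hs : IsSharpSpecial' k a (a (2*k))) :
    IsSharpSpecial' k (fun n => if n = 2*k then -1 - a (2*k) else a n)
      (-1 - a (2*k)) := by
  obtain ⟨b, hperm, hb, hlast⟩ := hs
  obtain ⟨τ, hτ⟩ := hperm.exists_perm_init hlast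
  have hmatch := (hasNonnegMatching_of_pairs hpa).of_perm τ hτ
  have hflip := hb.ite_last fun i hi => hb.hasNonnegPairFrom hmatch hi
  rw [hlast] at hflip
  exact ⟨_, permOf_ite_last τ hτ _, hflip, by simp⟩
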